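/- Let 𝓕 be a collection of subsets of E closed under arbitrary (possibly infinite) intersections and containing the empty set, let c be the associated closure operator (c(X) is the intersection of all members of 𝓕 containing X), and let L ⊆ E. Define L₀ = E and L_{k+1} = c(L_k ∩ L) if k is even, L_{k+1} = c(L_k ∖ L) if k is odd. Then for every n ≥ 1, L belongs to B_{n−1}(𝓕) if and only if Lₙ = ∅, and in that case L = L₁ − L₂ + ⋯ ± L_{n−1}. -/
import Mathlib


/-- The alternating difference `(X₁ ∖ X₂) ∪ (X₃ ∖ X₄) ∪ ⋯` of a (decreasing,
eventually empty) chain of sets, indexed from `0` (so `X i` is `X_{i+1}`). -/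
def altDiff {E : Type*} (X : ℕ → Set E) : Set E :=
  ⋃ k, X (2 * k) \ X (2 * k + 1)

/-- The `n`-th level `Bₙ(𝓕)` of the difference hierarchy over `𝓕`. -/
def diffHier {E : Type*} (F : Set (Set E)) (n : ℕ) : Set (Set E) :=
  {S | ∃ X : ℕ → Set E, (∀ i, i < n → X i ∈ F) ∧ (∀ i, n ≤ i → X i = ∅) ∧
    (∀ i j, i ≤ j → X j ⊆ X i) ∧ S = altDiff X}

/-- The partial alternating combination `S_j = F₁ − F₂ + ⋯ ± F_j`, evaluated
from left to right (the chain `F` is indexed from `0`, so `F i` is `F_{i+1}`). -/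
def partialAlt {E : Type*} (F : ℕ → Set E) : ℕ → Set E
  | 0 => ∅
  | j + 1 => if Even j then partialAlt F j ∪ F j else partialAlt F j \ F j

/-- The best-approximation sequence: `L₀ = E`, `L_{k+1} = c(L_k ∩ L)` for even
`k` and `L_{k+1} = c(L_k ∖ L)` for odd `k`. -/
def bestSeq {E : Type*} (c : Set E → Set E) (L : Set E) : ℕ → Set E
  | 0 => Set.univ
  | k + 1 => if Even k then c (bestSeq c L k ∩ L) else c (bestSeq c L k \ L)

lemma partialAlt_two_mul {E : Type*} (F : ℕ → Set E) (hdec : ∀ i j, i ≤ j → F j ⊆ F i)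
    (k : ℕ) : partialAlt F (2 * k) = ⋃ i, ⋃ (_ : i < k), F (2 * i) \ F (2 * i + 1) := by
  induction k with
  | zero => simp [partialAlt]
  | succ k ih =>
    have h2 : 2 * (k + 1) = (2 * k + 1) + 1 := by ring
    rw [h2]
    have hodd : ¬ Even (2 * k + 1) := by simp [Nat.even_add_one]
    rw [show partialAlt F ((2*k+1)+1) = partialAlt F (2*k+1) \ F (2*k+1) from by
          simp [partialAlt, hodd],
        show partialAlt F (2*k+1) = partialAlt F (2*k) ∪ F (2*k) from by
          simp [partialAlt], ih]
    ext x
    simp only [Set.mem_diff, Set.mem_union, Set.mem_iUnion]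
    constructor
    · rintro ⟨⟨i, hik, hx⟩ | hx, h2⟩
      · exact ⟨i, Nat.lt_succ_of_lt hik, hx⟩
      · exact ⟨k, Nat.lt_succ_self k, hx, h2⟩
    · rintro ⟨i, hik, hx1, hx2⟩
      rcases Nat.lt_succ_iff_lt_or_eq.mp hik with h | rfl
      · refine ⟨Or.inl ⟨i, h, hx1, hx2⟩, fun hx => hx2 ?_⟩
        exact hdec (2*i+1) (2*k+1) (by omega) hx
      · exact ⟨Or.inr hx1, hx2⟩

lemma partialAlt_eq_altDiff {E : Type*} (F : ℕ → Set E) (hdec : ∀ i j, i ≤ j → F j ⊆ F i)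
    (m : ℕ) (h0 : ∀ j, m ≤ j → F j = ∅) : partialAlt F m = altDiff F := by
  rcases Nat.even_or_odd m with ⟨k, hk⟩ | ⟨k, hk⟩
  · subst hk
    rw [show k + k = 2 * k from by ring, partialAlt_two_mul F hdec]
    ext x
    simp only [altDiff, Set.mem_iUnion, Set.mem_diff]
    constructor
    · rintro ⟨i, _, hx⟩; exact ⟨i, hx⟩
    · rintro ⟨i, hx1, hx2⟩
      refine ⟨i, ?_, hx1, hx2⟩
      by_contra h
      rw [h0 (2*i) (by omega)] at hx1
      exact hx1
  · subst hk
    rw [show 2 * k + 1 = (2*k) + 1 from rfl,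
        show partialAlt F (2*k+1) = partialAlt F (2*k) ∪ F (2*k) from by
          simp [partialAlt],
        partialAlt_two_mul F hdec]
    ext x
    simp only [altDiff, Set.mem_union, Set.mem_iUnion, Set.mem_diff]
    constructor
    · rintro (⟨i, _, hx⟩ | hx)
      · exact ⟨i, hx⟩
      · refine ⟨k, hx, ?_⟩
        rw [h0 (2*k+1) (by omega)]; exact not_false
    · rintro ⟨i, hx1, hx2⟩
      rcases lt_or_ge i k with h | h
      · exact Or.inl ⟨i, h, hx1, hx2⟩
      · have : i = k := by
          by_contra hik
          rw [h0 (2*i) (by omega)] at hx1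
          exact hx1
        subst this
        exact Or.inr hx1

/-- Let `𝓕` be closed under arbitrary intersections and contain `∅`, let `c` be
the associated closure operator, and let `(L_k)` be the best-approximation
sequence of `L`. Then for every `n ≥ 1`, `L ∈ B_{n−1}(𝓕)` iff `Lₙ = ∅`, in which
case `L = L₁ − L₂ + ⋯ ± L_{n−1}`. -/
theorem mem_diffHier_iff_bestSeq_empty {E : Type*} (F : Set (Set E))
    (hsInter : ∀ S : Set (Set E), S ⊆ F → ⋂₀ S ∈ F) (hempty : (∅ : Set E) ∈ F)
    (L : Set E) (c : Set E → Set E) (hc : ∀ X, c X = ⋂₀ {G | G ∈ F ∧ X ⊆ G}) :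
    ∀ n : ℕ, 1 ≤ n →
      (L ∈ diffHier F (n - 1) ↔ bestSeq c L n = ∅) ∧
      (bestSeq c L n = ∅ →
        L = partialAlt (fun i => bestSeq c L (i + 1)) (n - 1)) := by
  classical
  -- closure operator basics
  have cF : ∀ X : Set E, c X ∈ F := by
    intro X; rw [hc]; exact hsInter _ (fun G hG => hG.1)
  have subc : ∀ X : Set E, X ⊆ c X := by
    intro X x hx
    rw [hc]
    exact fun G hG => hG.2 hx
  have csub : ∀ X G : Set E, G ∈ F → X ⊆ G → c X ⊆ G := by
    intro X G hG hXG
    rw [hc]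
    exact Set.sInter_subset_of_mem ⟨hG, hXG⟩
  set B : ℕ → Set E := bestSeq c L with hB
  have Beven : ∀ k, Even k → B (k + 1) = c (B k ∩ L) := by
    intro k hk; simp [hB, bestSeq, hk]
  have Bodd : ∀ k, ¬ Even k → B (k + 1) = c (B k \ L) := by
    intro k hk; simp [hB, bestSeq, hk]
  have BF : ∀ k, B (k + 1) ∈ F := by
    intro k
    by_cases hk : Even k
    · rw [Beven k hk]; exact cF _
    · rw [Bodd k hk]; exact cF _
  have Bsucc : ∀ k, B (k + 1) ⊆ B k := by
    intro k
    match k with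
    | 0 => exact Set.subset_univ _
    | k + 1 =>
      by_cases hk : Even (k + 1)
      · rw [Beven _ hk]; exact csub _ _ (BF k) Set.inter_subset_left
      · rw [Bodd _ hk]; exact csub _ _ (BF k) Set.diff_subset
  have Bmono : ∀ i j, i ≤ j → B j ⊆ B i := by
    intro i j hij
    induction hij with
    | refl => exact subset_rfl
    | step _ ih => exact fun x hx => ih (Bsucc _ hx)
  have BA : ∀ k, Even k → B k ∩ L ⊆ B (k + 1) := by
    intro k hk; rw [Beven k hk]; exact subc _
  have BB : ∀ k, ¬ Even k → B k \ L ⊆ B (k + 1) := by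
    intro k hk; rw [Bodd k hk]; exact subc _
  intro n hn
  -- backward direction: Bₙ = ∅ → L = altDiff (B ∘ (·+1)) and everything
  have hback : B n = ∅ → L = altDiff (fun i => B (i + 1)) := by
    intro h0
    ext x
    constructor
    · intro hxL
      have hex : ∃ m, x ∉ B m := ⟨n, by rw [h0]; exact not_false⟩
      have h1 : x ∉ B (Nat.find hex) := Nat.find_spec hex
      have hm0 : Nat.find hex ≠ 0 := by
        intro h
        apply h1
        rw [h]
        exact Set.mem_univ x
      obtain ⟨m', hm'⟩ := Nat.exists_eq_succ_of_ne_zero hm0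
      rw [hm'] at h1
      have h2 : x ∈ B m' := by
        by_contra h
        have := Nat.find_min' hex h
        omega
      have hodd : ¬ Even m' := by
        intro he
        exact h1 (BA m' he ⟨h2, hxL⟩)
      obtain ⟨j, hj⟩ := Nat.not_even_iff_odd.mp hodd
      simp only [altDiff, Set.mem_iUnion, Set.mem_diff]
      exact ⟨j, by rw [show 2*j+1 = m' from by omega]; exact h2,
                by rw [show 2*j+1+1 = m'+1 from by omega]; exact h1⟩
    · intro hx
      simp only [altDiff, Set.mem_iUnion, Set.mem_diff] at hx
      obtain ⟨j, hx1, hx2⟩ := hx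
      by_contra hxL
      have hodd : ¬ Even (2*j+1) := by simp [Nat.even_add_one]
      exact hx2 (BB _ hodd ⟨hx1, hxL⟩)
  have hdecB : ∀ i j, i ≤ j → (fun i => B (i + 1)) j ⊆ (fun i => B (i + 1)) i :=
    fun i j hij => Bmono (i+1) (j+1) (by omega)
  have h0B : B n = ∅ → ∀ j, n - 1 ≤ j → B (j + 1) = ∅ := by
    intro h0 j hj
    exact Set.subset_empty_iff.mp (h0 ▸ Bmono n (j+1) (by omega))
  constructor
  · constructor
    · -- forward: L ∈ diffHier → Bₙ = ∅
      rintro ⟨X, hXF, hX0, hXdec, rfl⟩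
      have hXF' : ∀ i, X i ∈ F := by
        intro i
        rcases lt_or_ge i (n-1) with h | h
        · exact hXF i h
        · rw [hX0 i h]; exact hempty
      have key : ∀ k, B (k + 1) ⊆ X k := by
        intro k
        induction k with
        | zero =>
          rw [Beven 0 (Even.zero)]
          refine csub _ _ (hXF' 0) ?_
          rintro x ⟨-, hx⟩
          simp only [altDiff, Set.mem_iUnion, Set.mem_diff] at hx
          obtain ⟨j, hx1, -⟩ := hx
          exact hXdec 0 (2*j) (by omega) hx1
        | succ k ih =>
          by_cases hk : Even (k + 1)
          · rw [Beven _ hk]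
            refine csub _ _ (hXF' (k+1)) ?_
            rintro x ⟨hxB, hxL⟩
            have hxX : x ∈ X k := ih hxB
            simp only [altDiff, Set.mem_iUnion, Set.mem_diff] at hxL
            obtain ⟨j, hx1, hx2⟩ := hxL
            have : k < 2*j + 1 := by
              by_contra h
              exact hx2 (hXdec (2*j+1) k (by omega) hxX)
            have hko : ¬ Even k := by
              rw [Nat.even_add_one] at hk; exact fun h => hk h
            have : k + 1 ≤ 2 * j := by
              rcases Nat.not_even_iff_odd.mp hko with ⟨t, ht⟩
              omega
            exact hXdec (k+1) (2*j) this hx1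
          · rw [Bodd _ hk]
            refine csub _ _ (hXF' (k+1)) ?_
            rintro x ⟨hxB, hxL⟩
            have hxX : x ∈ X k := ih hxB
            have hke : Even k := by
              rw [Nat.even_add_one, not_not] at hk; exact hk
            obtain ⟨j, hj⟩ := hke
            by_contra hxk1
            apply hxL
            simp only [altDiff, Set.mem_iUnion, Set.mem_diff]
            exact ⟨j, by rw [show 2*j = k from by omega]; exact hxX,
                      by rw [show 2*j+1 = k+1 from by omega]; exact hxk1⟩
      have : B n ⊆ X (n - 1) := by
        rw [show n = (n-1) + 1 from by omega]
        exact key (n-1)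
      rw [hX0 (n-1) le_rfl] at this
      exact Set.subset_empty_iff.mp this
    · -- backward: Bₙ = ∅ → L ∈ diffHier
      intro h0
      refine ⟨fun i => B (i + 1), fun i _ => BF i, h0B h0, hdecB, hback h0⟩
  · intro h0
    rw [hback h0, partialAlt_eq_altDiff _ hdecB (n-1) (h0B h0)]
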